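/- Suppose G ∈ L²(γ) and additionally G(·±M) ∈ L²(γ) for some M > 0. Then for |x| < M and every m ≥ 0, the m-th derivative of G_∞(x) = E[G(Z+x)] satisfies G_∞^{(m)}(x) = E[G(Z+x) H_m(Z)]. -/

import Mathlib

open MeasureTheory Real

noncomputable def stdPhi (x : ℝ) : ℝ := (Real.sqrt (2 * Real.pi))⁻¹ * Real.exp (-x ^ 2 / 2)

noncomputable def hermiteEval (m : ℕ) (z : ℝ) : ℝ :=
  Polynomial.aeval z (Polynomial.hermite m)

/-! Substituting `u = z + y` gives `G_∞(y) = ∫ G(u) φ(u - y) du`, so all dependence on `y` sits in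
the Gaussian kernel, and the recursion `H_{k+1} = X H_k - H_k'` says exactly that
`∂_y [H_k(u - y) φ(u - y)] = H_{k+1}(u - y) φ(u - y)`. Differentiating under the integral is
justified for `|y| ≤ M` by `φ(u - y) ≤ e^{M²/2} (φ(u - M) + φ(u + M))` together with
`|G H_k| ≤ G² + H_k²`: the first term is integrable against the two shifted Gaussians by the
hypotheses on `G(· ± M)`, the second because every polynomial is. -/

open Polynomial

lemma stdPhi_pos (x : ℝ) : 0 < stdPhi x := by
  unfold stdPhi; positivity

@[fun_prop]
lemma continuous_stdPhi : Continuous stdPhi := by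
  unfold stdPhi; fun_prop

@[fun_prop]
lemma continuous_hermiteEval (m : ℕ) : Continuous (hermiteEval m) :=
  (hermite m).continuous_aeval

lemma hasDerivAt_stdPhi (t : ℝ) : HasDerivAt stdPhi (-t * stdPhi t) t := by
  have h := (((hasDerivAt_pow 2 t).const_mul (-1 / 2 : ℝ)).exp).const_mul (√(2 * π))⁻¹
  have hfun : stdPhi = fun x => (√(2 * π))⁻¹ * exp (-1 / 2 * x ^ 2) := by
    ext x; simp only [stdPhi]; ring_nf
  rw [hfun]
  refine h.congr_deriv ?_
  push_cast
  ring

lemma hasDerivAt_hermiteEval_mul_stdPhi (m : ℕ) (t : ℝ) :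
    HasDerivAt (fun s => hermiteEval m s * stdPhi s) (-(hermiteEval (m + 1) t * stdPhi t)) t := by
  have h : HasDerivAt (hermiteEval m) (aeval t (derivative (hermite m))) t :=
    (hermite m).hasDerivAt_aeval t
  refine (h.mul (hasDerivAt_stdPhi t)).congr_deriv ?_
  simp only [hermiteEval, hermite_succ, map_sub, map_mul, aeval_X]
  ring

lemma integrable_eval_mul_stdPhi (p : ℝ[X]) : Integrable fun t => p.eval t * stdPhi t := by
  have hmono (i : ℕ) : Integrable fun t : ℝ => t ^ i * exp (-(1 / 2) * t ^ 2) := by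
    simpa [Real.rpow_natCast] using
      integrable_rpow_mul_exp_neg_mul_sq (b := 1 / 2) (by norm_num) (s := i)
        (by linarith [Nat.cast_nonneg (α := ℝ) i])
  have := integrable_finsetSum (Finset.range (p.natDegree + 1))
    fun i _ => (hmono i).const_mul (p.coeff i * (√(2 * π))⁻¹)
  refine this.congr (Filter.Eventually.of_forall fun t => ?_)
  simp only [eval_eq_sum_range, Finset.sum_mul, stdPhi]
  refine Finset.sum_congr rfl fun i _ => ?_
  ring_nf

lemma integrable_eval_mul_stdPhi_sub (p : ℝ[X]) (c : ℝ) :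
    Integrable fun u => p.eval u * stdPhi (u - c) := by
  have h : Integrable fun u => (p.comp (X + C c)).eval (u - c) * stdPhi (u - c) :=
    (integrable_eval_mul_stdPhi _).comp_sub_right c
  simpa using h

lemma Polynomial.exists_abs_eval_le (p : ℝ[X]) :
    ∃ A, 0 ≤ A ∧ ∀ t : ℝ, |p.eval t| ≤ A * (1 + |t|) ^ p.natDegree := by
  refine ⟨∑ i ∈ Finset.range (p.natDegree + 1), |p.coeff i|,
    Finset.sum_nonneg fun i _ => abs_nonneg _, fun t => ?_⟩
  rw [eval_eq_sum_range, Finset.sum_mul]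
  refine (Finset.abs_sum_le_sum_abs _ _).trans (Finset.sum_le_sum fun i hi => ?_)
  rw [abs_mul, abs_pow]
  gcongr
  calc |t| ^ i ≤ (1 + |t|) ^ i := by gcongr; linarith
    _ ≤ (1 + |t|) ^ p.natDegree :=
      pow_le_pow_right₀ (by linarith [abs_nonneg t]) (Nat.lt_succ_iff.mp (Finset.mem_range.mp hi))

lemma Polynomial.exists_sq_eval_sub_le (p : ℝ[X]) (M : ℝ) :
    ∃ q : ℝ[X], ∀ u y : ℝ, |y| ≤ M → p.eval (u - y) ^ 2 ≤ q.eval u := by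
  obtain ⟨A, hA, hp⟩ := p.exists_abs_eval_le
  refine ⟨C (A ^ 2) * (C (2 * (1 + M) ^ 2) + C 2 * X ^ 2) ^ p.natDegree, fun u y hy => ?_⟩
  have hshift : 1 + |u - y| ≤ 1 + M + |u| := by linarith [abs_sub u y]
  have hsq : (1 + M + |u|) ^ 2 ≤ 2 * (1 + M) ^ 2 + 2 * u ^ 2 := by
    nlinarith [sq_nonneg (1 + M - |u|), sq_abs u]
  simp only [eval_mul, eval_pow, eval_add, eval_C, eval_X]
  calc p.eval (u - y) ^ 2 = |p.eval (u - y)| ^ 2 := (sq_abs _).symm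
    _ ≤ (A * (1 + M + |u|) ^ p.natDegree) ^ 2 := by
      gcongr
      exact (hp _).trans (by gcongr)
    _ = A ^ 2 * ((1 + M + |u|) ^ 2) ^ p.natDegree := by
      rw [mul_pow, ← pow_mul, ← pow_mul, mul_comm 2]
    _ ≤ A ^ 2 * (2 * (1 + M) ^ 2 + 2 * u ^ 2) ^ p.natDegree := by
      have : 0 ≤ 1 + |u - y| := by positivity
      gcongr

lemma stdPhi_sub_le {M y : ℝ} (hy : |y| ≤ M) (u : ℝ) :
    stdPhi (u - y) ≤ exp (M ^ 2 / 2) * (stdPhi (u - M) + stdPhi (u + M)) := by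
  have hcentre (c : ℝ) (hc : |c| = M) (huc : 0 ≤ u * (c - y)) :
      stdPhi (u - y) ≤ exp (M ^ 2 / 2) * stdPhi (u - c) := by
    simp only [stdPhi]
    rw [mul_left_comm, ← exp_add]
    gcongr
    have hc2 : c ^ 2 = M ^ 2 := by rw [← sq_abs, hc]
    nlinarith [sq_nonneg y]
  rcases le_total 0 u with hu | hu
  · calc stdPhi (u - y) ≤ exp (M ^ 2 / 2) * stdPhi (u - M) :=
          hcentre M (abs_of_nonneg ((abs_nonneg y).trans hy))
            (mul_nonneg hu (by linarith [le_abs_self y]))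
      _ ≤ _ := by gcongr; linarith [stdPhi_pos (u + M)]
  · calc stdPhi (u - y) ≤ exp (M ^ 2 / 2) * stdPhi (u + M) := by
          simpa using hcentre (-M) (by rw [abs_neg, abs_of_nonneg ((abs_nonneg y).trans hy)])
            (mul_nonneg_of_nonpos_of_nonpos hu (by linarith [neg_abs_le y]))
      _ ≤ _ := by gcongr; linarith [stdPhi_pos (u - M)]

lemma hermiteEval_eq_eval_map (m : ℕ) (t : ℝ) :
    hermiteEval m t = ((hermite m).map (algebraMap ℤ ℝ)).eval t := by
  rw [hermiteEval, aeval_def, eval₂_eq_eval_map]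

lemma hermiteEval_zero (t : ℝ) : hermiteEval 0 t = 1 := by
  simp [hermiteEval]

section WeierstrassTransform

variable {G : ℝ → ℝ} {M : ℝ}

lemma integrable_sq_mul_stdPhi_sub_add_stdPhi_add
    (hplus : Integrable (fun z => (G (z + M)) ^ 2 * stdPhi z))
    (hminus : Integrable (fun z => (G (z - M)) ^ 2 * stdPhi z)) :
    Integrable fun u => G u ^ 2 * (stdPhi (u - M) + stdPhi (u + M)) := by
  have h₁ : Integrable fun u => G (u - M + M) ^ 2 * stdPhi (u - M) := hplus.comp_sub_right M
  have h₂ : Integrable fun u => G (u + M - M) ^ 2 * stdPhi (u + M) := hminus.comp_add_right M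
  simp only [sub_add_cancel, add_sub_cancel_right] at h₁ h₂
  simpa only [mul_add, Pi.add_def] using h₁.add h₂

lemma exists_integrable_bound_mul_hermiteEval_mul_stdPhi_sub
    (hplus : Integrable (fun z => (G (z + M)) ^ 2 * stdPhi z))
    (hminus : Integrable (fun z => (G (z - M)) ^ 2 * stdPhi z)) (k : ℕ) :
    ∃ bound : ℝ → ℝ, Integrable bound ∧ ∀ u y : ℝ, |y| ≤ M →
      |G u * (hermiteEval k (u - y) * stdPhi (u - y))| ≤ bound u := by
  obtain ⟨q, hq⟩ := ((hermite k).map (algebraMap ℤ ℝ)).exists_sq_eval_sub_le M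
  refine ⟨fun u => exp (M ^ 2 / 2) * ((G u ^ 2 + q.eval u) * (stdPhi (u - M) + stdPhi (u + M))),
    ?_, fun u y hy => ?_⟩
  · have hqψ : Integrable fun u => q.eval u * (stdPhi (u - M) + stdPhi (u + M)) := by
      simpa only [mul_add, Pi.add_def, sub_neg_eq_add] using
        (integrable_eval_mul_stdPhi_sub q M).add (integrable_eval_mul_stdPhi_sub q (-M))
    simpa only [add_mul, Pi.add_def] using
      ((integrable_sq_mul_stdPhi_sub_add_stdPhi_add hplus hminus).add hqψ).const_mul _
  · have hGH : |G u| * |hermiteEval k (u - y)| ≤ G u ^ 2 + q.eval u := by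
      have hH : hermiteEval k (u - y) ^ 2 ≤ q.eval u := by
        simpa only [← hermiteEval_eq_eval_map] using hq u y hy
      nlinarith [two_mul_le_add_sq |G u| |hermiteEval k (u - y)|, sq_abs (G u),
        sq_abs (hermiteEval k (u - y)), abs_nonneg (G u), abs_nonneg (hermiteEval k (u - y))]
    rw [abs_mul, abs_mul, abs_of_pos (stdPhi_pos _), ← mul_assoc]
    calc |G u| * |hermiteEval k (u - y)| * stdPhi (u - y)
        ≤ (G u ^ 2 + q.eval u) * (exp (M ^ 2 / 2) * (stdPhi (u - M) + stdPhi (u + M))) :=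
          mul_le_mul hGH (stdPhi_sub_le hy u) (stdPhi_pos _).le
            ((mul_nonneg (abs_nonneg _) (abs_nonneg _)).trans hGH)
      _ = _ := by ring

lemma integral_comp_add_mul_hermiteEval_mul_stdPhi (k : ℕ) (y : ℝ) :
    ∫ z, G (z + y) * hermiteEval k z * stdPhi z
      = ∫ u, G u * (hermiteEval k (u - y) * stdPhi (u - y)) := by
  rw [← integral_add_right_eq_self (fun u => G u * (hermiteEval k (u - y) * stdPhi (u - y))) y]
  simp only [add_sub_cancel_right, mul_assoc]

lemma hasDerivAt_integral_comp_add_mul_hermiteEval_mul_stdPhi (hmeas : Measurable G)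
    (hplus : Integrable (fun z => (G (z + M)) ^ 2 * stdPhi z))
    (hminus : Integrable (fun z => (G (z - M)) ^ 2 * stdPhi z)) (k : ℕ) {x : ℝ} (hx : |x| < M) :
    HasDerivAt (fun y => ∫ z, G (z + y) * hermiteEval k z * stdPhi z)
      (∫ z, G (z + x) * hermiteEval (k + 1) z * stdPhi z) x := by
  simp only [integral_comp_add_mul_hermiteEval_mul_stdPhi]
  have hmeasF (j : ℕ) (y : ℝ) :
      AEStronglyMeasurable (fun u => G u * (hermiteEval j (u - y) * stdPhi (u - y))) := by
    have hkernel : Continuous fun u => hermiteEval j (u - y) * stdPhi (u - y) := by fun_prop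
    exact (hmeas.mul hkernel.measurable).aestronglyMeasurable
  have hderiv (u y : ℝ) : HasDerivAt (fun s => G u * (hermiteEval k (u - s) * stdPhi (u - s)))
      (G u * (hermiteEval (k + 1) (u - y) * stdPhi (u - y))) y := by
    have h := ((hasDerivAt_hermiteEval_mul_stdPhi k (u - y)).comp y
      ((hasDerivAt_id y).const_sub u)).const_mul (G u)
    exact h.congr_deriv (by ring)
  obtain ⟨bound₀, hbound₀, hle₀⟩ :=
    exists_integrable_bound_mul_hermiteEval_mul_stdPhi_sub hplus hminus k
  obtain ⟨bound, hbound, hle⟩ :=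
    exists_integrable_bound_mul_hermiteEval_mul_stdPhi_sub hplus hminus (k + 1)
  have hnhds : {y : ℝ | |y| < M} ∈ nhds x :=
    (isOpen_lt continuous_abs continuous_const).mem_nhds hx
  refine (hasDerivAt_integral_of_dominated_loc_of_deriv_le hnhds
    (Filter.Eventually.of_forall (hmeasF k))
    (hbound₀.mono' (hmeasF k x) (Filter.Eventually.of_forall fun u => hle₀ u x hx.le))
    (hmeasF (k + 1) x)
    (Filter.Eventually.of_forall fun u y hy => hle u y (le_of_lt hy)) hbound
    (Filter.Eventually.of_forall fun u y _ => hderiv u y)).2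

end WeierstrassTransform

theorem iteratedDeriv_eq_of_hasDerivAt_succ {𝕜 F : Type*} [NontriviallyNormedField 𝕜]
    [NormedAddCommGroup F] [NormedSpace 𝕜 F] {Φ : ℕ → 𝕜 → F} {U : Set 𝕜} (hU : IsOpen U)
    (hΦ : ∀ k, ∀ x ∈ U, HasDerivAt (Φ k) (Φ (k + 1) x) x) (m : ℕ) :
    ∀ x ∈ U, iteratedDeriv m (Φ 0) x = Φ m x := by
  induction m with
  | zero => simp
  | succ m ih =>
    intro x hx
    have hlocal : iteratedDeriv m (Φ 0) =ᶠ[nhds x] Φ m :=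
      Filter.eventually_of_mem (hU.mem_nhds hx) ih
    rw [iteratedDeriv_succ, hlocal.deriv_eq]
    exact (hΦ m x hx).deriv

theorem weierstrass_transform_derivatives_general
    (G : ℝ → ℝ) (hmeas : Measurable G) (M : ℝ)
    (hplus : Integrable (fun z => (G (z + M)) ^ 2 * stdPhi z))
    (hminus : Integrable (fun z => (G (z - M)) ^ 2 * stdPhi z)) :
    ∀ m : ℕ, ∀ x : ℝ, |x| < M →
      iteratedDeriv m (fun y => ∫ z : ℝ, G (z + y) * stdPhi z) x
        = ∫ z : ℝ, G (z + x) * hermiteEval m z * stdPhi z := by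
  intro m x hx
  have hF : (fun y => ∫ z, G (z + y) * stdPhi z)
      = fun y => ∫ z, G (z + y) * hermiteEval 0 z * stdPhi z := by
    simp only [hermiteEval_zero, mul_one]
  rw [hF]
  exact iteratedDeriv_eq_of_hasDerivAt_succ (isOpen_lt continuous_abs continuous_const)
    (fun k _ hy => hasDerivAt_integral_comp_add_mul_hermiteEval_mul_stdPhi hmeas hplus hminus k hy)
    m x hx

/-- If `G ∈ L²(γ)` and `G(·±M) ∈ L²(γ)` for some `M > 0`, then for `|x| < M`
the `m`-th derivative of `G_∞(x) = E[G(Z+x)]` equals `E[G(Z+x) H_m(Z)]`. -/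
theorem weierstrass_transform_derivatives
    (G : ℝ → ℝ) (hmeas : Measurable G) (M : ℝ) (hM : 0 < M)
    (hL2 : Integrable (fun z => (G z) ^ 2 * stdPhi z))
    (hplus : Integrable (fun z => (G (z + M)) ^ 2 * stdPhi z))
    (hminus : Integrable (fun z => (G (z - M)) ^ 2 * stdPhi z)) :
    ∀ m : ℕ, ∀ x : ℝ, |x| < M →
      iteratedDeriv m (fun y => ∫ z : ℝ, G (z + y) * stdPhi z) x
        = ∫ z : ℝ, G (z + x) * hermiteEval m z * stdPhi z :=
  weierstrass_transform_derivatives_general G hmeas M hplus hminus
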